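/- Let n ≥ 2 and let x ⋖ y be a cover relation in P_n^* between wire diagrams with S(x) = S(y), and suppose λ(x,y) = (i,j) with i < j (so the step is a nesting uncrossing of the crossing formed by wires i and j of x). Then π(y) = t ∘ π(x), where t is the transposition of {1,…,n} interchanging i and j, and inv(π(y)) = inv(π(x)) + 1. -/

import Mathlib

open Equiv Finset

/-- A candidate wire diagram: a permutation of the `2 n` endpoint positions. -/
abbrev WDperm (n : ℕ) := Equiv.Perm (Fin (2 * n))

/-- `σ` is a wire diagram on `n` wires: a fixed-point-free involution of the `2 n` positions. -/
def IsWD {n : ℕ} (σ : WDperm n) : Prop := (∀ x, σ (σ x) = x) ∧ ∀ x, σ x ≠ x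

instance IsWD.decPred {n : ℕ} : DecidablePred (@IsWD n) := fun σ => by
  unfold IsWD; infer_instance

/-- Positions `a < c` are first endpoints of a pair of crossing wires `{a, σ a}`, `{c, σ c}`,
i.e. `a < c < σ a < σ c`. -/
def IsCrossing {n : ℕ} (σ : WDperm n) (a c : Fin (2 * n)) : Prop :=
  a < c ∧ c < σ a ∧ σ a < σ c

instance IsCrossing.dec {n : ℕ} (σ : WDperm n) (a c : Fin (2 * n)) :
    Decidable (IsCrossing σ a c) := by unfold IsCrossing; infer_instance

/-- The number `c(σ)` of crossings of `σ`. -/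
def ncross {n : ℕ} (σ : WDperm n) : ℕ :=
  (Finset.univ.filter (fun p : Fin (2 * n) × Fin (2 * n) => IsCrossing σ p.1 p.2)).card

/-- The nesting uncrossing of the crossing `{a, σ a}, {c, σ c}` (with `a < c < σ a < σ c`):
replace the pairs `{a,b},{c,d}` by `{a,d},{b,c}` where `b = σ a`, `d = σ c`. -/
def nestU {n : ℕ} (σ : WDperm n) (a c : Fin (2 * n)) : WDperm n :=
  Equiv.swap (σ a) (σ c) * σ * Equiv.swap (σ a) (σ c)

/-- The disjoint uncrossing: replace the pairs `{a,b},{c,d}` by `{a,c},{b,d}`. -/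
def disjU {n : ℕ} (σ : WDperm n) (a c : Fin (2 * n)) : WDperm n :=
  Equiv.swap (σ a) c * σ * Equiv.swap (σ a) c

/-- `τ` is obtained from `σ` by a nesting uncrossing of some crossing of `σ`. -/
def IsNestStep {n : ℕ} (σ τ : WDperm n) : Prop := ∃ a c, IsCrossing σ a c ∧ τ = nestU σ a c

/-- `τ` is obtained from `σ` by a disjoint uncrossing of some crossing of `σ`. -/
def IsDisjStep {n : ℕ} (σ τ : WDperm n) : Prop := ∃ a c, IsCrossing σ a c ∧ τ = disjU σ a c

/-- `τ` is obtained from `σ` by an uncrossing step that decreases the crossing number by one. -/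
def UncCov {n : ℕ} (σ τ : WDperm n) : Prop :=
  (IsNestStep σ τ ∨ IsDisjStep σ τ) ∧ ncross τ + 1 = ncross σ

/-- The dual uncrossing poset `P_n^*`: wire diagrams together with a top element `none = 1̂`
(the adjoined element `0̂` of `P_n`). -/
abbrev PStar (n : ℕ) := Option {σ : WDperm n // IsWD σ}

/-- The covering relation of `P_n^*`. -/
def Cov {n : ℕ} : PStar n → PStar n → Prop
  | some σ, some τ => UncCov σ.1 τ.1
  | some σ, none => ncross σ.1 = 0
  | none, _ => False

/-- The partial order of `P_n^*`: reflexive-transitive closure of the covering relation. -/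
def ple {n : ℕ} : PStar n → PStar n → Prop := Relation.ReflTransGen Cov

/-- The (0-indexed) name `w(σ)(x)` of the wire through position `x`: the number of wires whose
first endpoint is strictly smaller than the first endpoint of the wire through `x`. -/
def word {n : ℕ} (σ : WDperm n) (x : Fin (2 * n)) : ℕ :=
  (Finset.univ.filter (fun a : Fin (2 * n) => a < σ a ∧ a < min x (σ x))).card

/-- The start set `S(σ)`: the set of first endpoints of wires of `σ`. -/
def startSet {n : ℕ} (σ : WDperm n) : Finset (Fin (2 * n)) :=
  Finset.univ.filter (fun a => a < σ a)

/-- The noncrossing pair set `N(σ)` (on 0-indexed wire names): `(i, j)` with `i < j` for each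
nested pair of wires `i < j`, and `(j, i)` for each disjoint pair of wires `i < j`. -/
def NPairs {n : ℕ} (σ : WDperm n) : Set (ℕ × ℕ) :=
  {p | ∃ a c : Fin (2 * n), a < σ a ∧ c < σ c ∧ a < c ∧
        ((σ c < σ a ∧ p = (word σ a, word σ c)) ∨ (σ a < c ∧ p = (word σ c, word σ a)))}

/-- Lexicographic comparison of finsets via their increasing enumerations. -/
def finsetLexLE {m : ℕ} (A B : Finset (Fin m)) : Prop :=
  A = B ∨ List.Lex (· < ·) (A.sort (· ≤ ·)) (B.sort (· ≤ ·))

/-- Labels of the edge labeling: ordered pairs of (0-indexed) wire names, and a label `L`. -/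
inductive Lbl where
  | pair : ℕ → ℕ → Lbl
  | L : Lbl
deriving DecidableEq

/-- The total order `<λ` on labels. -/
def lblLT : Lbl → Lbl → Prop
  | .pair i j, .pair i' j' =>
      if i < j then (if i' < j' then i < i' ∨ (i = i' ∧ j < j') else True)
      else (if i' < j' then False else (j' < j ∨ (j = j' ∧ i' < i)))
  | .pair i j, .L => i < j
  | .L, .pair r s => s < r
  | .L, .L => False

/-- `≤λ` on labels. -/
def lblLE (p q : Lbl) : Prop := p = q ∨ lblLT p q

/-- The sorted list of positions where `σ` and `τ` differ. -/
def diffList {n : ℕ} (σ τ : WDperm n) : List (Fin (2 * n)) :=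
  (Finset.univ.filter (fun x => σ x ≠ τ x)).sort (· ≤ ·)

/-- The edge labeling `λ` of `P_n^*`: an uncrossing of the crossing formed by wires `k < m`
of the lower diagram gets label `(k, m)` if it is the nesting uncrossing and `(m, k)` if it is
the disjoint uncrossing; covers of the top element `1̂ = none` get the label `L`. -/
def lbl {n : ℕ} : PStar n → PStar n → Lbl
  | some σ, some τ =>
      match (diffList σ.1 τ.1)[0]?, (diffList σ.1 τ.1)[1]? with
      | some a, some c =>
          if τ.1 a = σ.1 c then Lbl.pair (word σ.1 a) (word σ.1 c)
          else Lbl.pair (word σ.1 c) (word σ.1 a)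
      | _, _ => Lbl.L
  | _, _ => Lbl.L

/-- `c` is a saturated chain from `u` to `v` in `P_n^*`. -/
def SatChain {n : ℕ} (c : List (PStar n)) (u v : PStar n) : Prop :=
  c.Chain' Cov ∧ c.head? = some u ∧ c.getLast? = some v

/-- The label sequence of a saturated chain. -/
def chainLabels {n : ℕ} (c : List (PStar n)) : List Lbl := c.zipWith lbl c.tail

/-- Lexicographic order on pairs of labels. -/
def pairLexLT (p q : Lbl × Lbl) : Prop := lblLT p.1 q.1 ∨ (p.1 = q.1 ∧ lblLT p.2 q.2)

/-- `x ⋖ y ⋖ z` is a topological ascent: its label pair is lexicographically strictly smaller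
than the label pair of every other saturated chain from `x` to `z`. -/
def TopAscent {n : ℕ} (x y z : PStar n) : Prop :=
  Cov x y ∧ Cov y z ∧ ∀ y' : PStar n, Cov x y' → Cov y' z → y' ≠ y →
    pairLexLT (lbl x y, lbl y z) (lbl x y', lbl y' z)

/-- `x ⋖ y ⋖ z` is a topological descent: a length-two chain that is not a topological ascent. -/
def TopDescent {n : ℕ} (x y z : PStar n) : Prop := Cov x y ∧ Cov y z ∧ ¬ TopAscent x y z

/-- Every length-two subchain of `c` is a topological ascent. -/
def AllTopAscents {n : ℕ} (c : List (PStar n)) : Prop :=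
  ∀ x y z : PStar n, [x, y, z] <:+: c → TopAscent x y z

/-- The number of inversions of a permutation. -/
def numInv {n : ℕ} (π : Equiv.Perm (Fin n)) : ℕ :=
  (Finset.univ.filter (fun p : Fin n × Fin n => p.1 < p.2 ∧ π p.2 < π p.1)).card

/-- One step of the Bruhat order: left multiplication by a transposition raising `inv` by one. -/
def BruhatStep {n : ℕ} (u v : Equiv.Perm (Fin n)) : Prop :=
  (∃ a b : Fin n, a ≠ b ∧ v = Equiv.swap a b * u) ∧ numInv v = numInv u + 1

/-- The Bruhat order on `S_n`. -/
def BruhatLE {n : ℕ} : Equiv.Perm (Fin n) → Equiv.Perm (Fin n) → Prop :=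
  Relation.ReflTransGen BruhatStep

/-- The set of second endpoints of wires of `σ`. -/
def secondEnds {n : ℕ} (σ : WDperm n) : Finset (Fin (2 * n)) :=
  Finset.univ.filter (fun b => σ b < b)

/-- The wire name at the `t`-th (0-indexed) second endpoint. -/
def piVal {n : ℕ} (σ : WDperm n) (t : ℕ) : ℕ :=
  (((secondEnds σ).sort (· ≤ ·))[t]?).elim 0 (word σ)

open Classical in
/-- The permutation `π(σ) ∈ S_n` reading the wire names at the second endpoints of `σ` in
increasing order of position. -/
noncomputable def piPerm {n : ℕ} (σ : WDperm n) : Equiv.Perm (Fin n) :=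
  if h : Function.Bijective (fun t : Fin n =>
      if ht : piVal σ (t : ℕ) < n then (⟨piVal σ (t : ℕ), ht⟩ : Fin n) else t)
  then Equiv.ofBijective _ h else 1

/-- Apply to the crossing at `(a, c)` the nesting (`nest = true`) or disjoint (`nest = false`)
uncrossing. -/
def uncrossAt {n : ℕ} (σ : WDperm n) (a c : Fin (2 * n)) (nest : Bool) : WDperm n :=
  if nest then nestU σ a c else disjU σ a c

/-!
Since the start sets agree, the cover is the nesting uncrossing of a crossing
`a < c < σ a < σ c`, which replaces the wires `{a, σ a}, {c, σ c}` by `{a, σ c}, {c, σ a}`.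
The second endpoints stay put and the wires ending at `σ a` and `σ c` exchange their names
`i = w(a)` and `j = w(c)`, so `π(y) = (i j) ∘ π(x) = π(x) ∘ (p q)`, where `p < q` are the
places of `σ a` and `σ c` among the second endpoints. Swapping two values of a permutation
raises the inversion number by `1 + 2 m`, where `m` counts the `t` between `p` and `q` whose
value lies between `i` and `j`. Each such `t` is the second endpoint of a wire `{z, σ z}` with
`a < z < c` and `σ a < σ z < σ c`, and the uncrossing lowers the crossing number by exactly
`1 + 2 · #{such wires}`; since `x ⋖ y` lowers it by one, `m = 0`.
-/

section PairCounting

variable {α : Type*} [Fintype α]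

theorem card_filter_prod_eq_sum_sum (P : α × α → Prop) [DecidablePred P] :
    #(univ.filter P) = ∑ p, ∑ q, if P (p, q) then 1 else 0 := by
  rw [card_filter]
  exact Fintype.sum_prod_type _

variable [DecidableEq α]

theorem sum_sum_eq_of_pair {M : Type*} [AddCommMonoid M] {a c : α} (hac : a ≠ c)
    (F : α → α → M) :
    ∑ p, ∑ q, F p q = ∑ p ∈ {a, c}ᶜ, ∑ q ∈ {a, c}ᶜ, F p q
      + ∑ t ∈ {a, c}ᶜ, (F a t + F c t + F t a + F t c) + (F a a + F a c + F c a + F c c) := by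
  simp only [← sum_add_sum_compl {a, c}, sum_pair hac, sum_add_distrib]
  abel

theorem sum_sum_eq_add_of_pair {a c : α} (hac : a ≠ c) {F G : α → α → ℕ} (B : Finset α)
    (ha : a ∉ B) (hc : c ∉ B)
    (h_off : ∀ p q, p ≠ a → p ≠ c → q ≠ a → q ≠ c → F p q = G p q)
    (h_cross : ∀ t, t ≠ a → t ≠ c → F a t + F c t + F t a + F t c
      = G a t + G c t + G t a + G t c + 2 * if t ∈ B then 1 else 0)
    (h_corner : F a a + F a c + F c a + F c c = G a a + G a c + G c a + G c c + 1) :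
    ∑ p, ∑ q, F p q = ∑ p, ∑ q, G p q + 1 + 2 * #B := by
  have hB : B ⊆ {a, c}ᶜ := fun t ht => by
    simp only [mem_compl, mem_insert, mem_singleton, not_or]
    exact ⟨ne_of_mem_of_not_mem ht ha, ne_of_mem_of_not_mem ht hc⟩
  have off : ∑ p ∈ {a, c}ᶜ, ∑ q ∈ {a, c}ᶜ, F p q
      = ∑ p ∈ {a, c}ᶜ, ∑ q ∈ {a, c}ᶜ, G p q := by
    refine sum_congr rfl fun p hp => sum_congr rfl fun q hq => ?_
    simp only [mem_compl, mem_insert, mem_singleton, not_or] at hp hq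
    exact h_off p q hp.1 hp.2 hq.1 hq.2
  have cross : ∑ t ∈ {a, c}ᶜ, (F a t + F c t + F t a + F t c)
      = ∑ t ∈ {a, c}ᶜ, (G a t + G c t + G t a + G t c) + 2 * #B := by
    rw [sum_congr rfl fun t ht => h_cross t _ _, sum_add_distrib, ← mul_sum, sum_boole,
      filter_mem_eq_inter, inter_eq_right.2 hB, Nat.cast_id]
    all_goals simp_all
  rw [sum_sum_eq_of_pair hac F, sum_sum_eq_of_pair hac G, off, cross, h_corner]
  ring

end PairCounting

theorem numInv_mul_swap {m : ℕ} (π : Perm (Fin m)) {p q : Fin m} (hpq : p < q)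
    (hπ : π p < π q) :
    numInv (π * swap p q) = numInv π + 1
      + 2 * #(univ.filter fun t => p < t ∧ t < q ∧ π p < π t ∧ π t < π q) := by
  unfold numInv
  rw [card_filter_prod_eq_sum_sum, card_filter_prod_eq_sum_sum]
  dsimp only
  apply sum_sum_eq_add_of_pair hpq.ne
  · simp
  · simp
  · intro s t hsp hsq htp htq
    simp only [Perm.mul_apply, swap_apply_of_ne_of_ne, *, Ne, not_false_eq_true]
  · intro t htp htq
    have hp : π t ≠ π p := π.injective.ne htp
    have hq : π t ≠ π q := π.injective.ne htq
    simp only [Perm.mul_apply, swap_apply_left, swap_apply_right, swap_apply_of_ne_of_ne htp htq,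
      mem_filter, mem_univ, true_and]
    rcases htp.lt_or_gt with h₁ | h₁ <;> rcases htq.lt_or_gt with h₂ | h₂ <;>
      rcases hp.lt_or_gt with h₃ | h₃ <;> rcases hq.lt_or_gt with h₄ | h₄ <;>
      first
      | (exfalso; order)
      | simp [*, not_lt_of_gt]
  · simp [hpq, hπ, not_lt_of_gt]

section Rank

variable {α : Type*} [LinearOrder α] (S : Finset α)

theorem card_filter_lt_strictMonoOn : StrictMonoOn (fun z => #(S.filter (· < z))) S := by
  intro s hs s' _ hss'
  refine card_lt_card ((ssubset_iff_of_subset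
    (monotone_filter_right S fun _ _ hz => lt_trans hz hss')).2 ⟨s, ?_, ?_⟩) <;> simp_all

variable {S}

theorem card_filter_lt_lt_card {s : α} (hs : s ∈ S) : #(S.filter (· < s)) < #S :=
  card_lt_card (filter_ssubset.2 ⟨s, hs, lt_irrefl s⟩)

theorem card_filter_lt_swap_apply {a c s : α} (ha : a ∈ S) (hc : c ∈ S) (hs : s ∈ S) :
    #(S.filter (· < swap a c s))
      = swap #(S.filter (· < a)) #(S.filter (· < c)) #(S.filter (· < s)) := by
  have hinj := (card_filter_lt_strictMonoOn S).injOn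
  by_cases hsa : s = a
  · rw [hsa, swap_apply_left, swap_apply_left]
  by_cases hsc : s = c
  · rw [hsc, swap_apply_right, swap_apply_right]
  rw [swap_apply_of_ne_of_ne hsa hsc, swap_apply_of_ne_of_ne (hinj.ne hs ha hsa)
    (hinj.ne hs hc hsc)]

end Rank

section WireDiagram

variable {n : ℕ} {ρ : WDperm n}

@[simp]
theorem mem_startSet {z : Fin (2 * n)} : z ∈ startSet ρ ↔ z < ρ z := by simp [startSet]

@[simp]
theorem mem_secondEnds {z : Fin (2 * n)} : z ∈ secondEnds ρ ↔ ρ z < z := by simp [secondEnds]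

theorem word_of_lt {z : Fin (2 * n)} (hz : z < ρ z) :
    word ρ z = #((startSet ρ).filter (· < z)) := by
  rw [word, startSet, filter_filter, min_eq_left hz.le]

theorem word_of_apply_lt {z : Fin (2 * n)} (hz : ρ z < z) :
    word ρ z = #((startSet ρ).filter (· < ρ z)) := by
  rw [word, startSet, filter_filter, min_eq_right hz.le]

variable (hρ : IsWD ρ)
include hρ

theorem IsWD.mem_secondEnds_iff {z : Fin (2 * n)} : z ∈ secondEnds ρ ↔ z ∉ startSet ρ := by
  rw [mem_secondEnds, mem_startSet, not_lt]
  exact ⟨le_of_lt, fun h => h.lt_of_ne (hρ.2 z)⟩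

theorem IsWD.apply_mem_startSet {z : Fin (2 * n)} (hz : z ∈ secondEnds ρ) :
    ρ z ∈ startSet ρ := by
  rw [mem_startSet, hρ.1]
  exact mem_secondEnds.1 hz

theorem IsWD.secondEnds_eq_image : secondEnds ρ = (startSet ρ).image ρ := by
  ext z
  simp only [mem_image, mem_secondEnds, mem_startSet]
  exact ⟨fun hz => ⟨ρ z, by rwa [hρ.1], hρ.1 z⟩,
    fun ⟨s, hs, hsz⟩ => hsz ▸ by rwa [hρ.1]⟩

theorem IsWD.card_startSet : #(startSet ρ) = n := by
  have hsplit : univ.filter (fun z => ¬ z < ρ z) = (startSet ρ).image ρ := by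
    ext z
    rw [← hρ.secondEnds_eq_image, hρ.mem_secondEnds_iff]
    simp
  have := card_filter_add_card_filter_not (s := univ) (fun z => z < ρ z)
  rw [hsplit, card_image_of_injective _ ρ.injective, card_univ, Fintype.card_fin] at this
  change #(startSet ρ) + #(startSet ρ) = 2 * n at this
  omega

theorem IsWD.card_secondEnds : #(secondEnds ρ) = n := by
  rw [hρ.secondEnds_eq_image, card_image_of_injective _ ρ.injective, hρ.card_startSet]

theorem IsWD.piPerm_apply (t : Fin n) :
    (piPerm ρ t : ℕ) = word ρ ((secondEnds ρ).orderEmbOfFin hρ.card_secondEnds t) := by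
  set E := (secondEnds ρ).orderEmbOfFin hρ.card_secondEnds
  have hval : ∀ t : Fin n, piVal ρ t = word ρ (E t) := fun t => by
    rw [piVal, List.getElem?_eq_getElem (by simp [hρ.card_secondEnds])]
    rfl
  have hrank : ∀ t, word ρ (E t) = #((startSet ρ).filter (· < ρ (E t))) := fun t =>
    word_of_apply_lt (mem_secondEnds.1 (orderEmbOfFin_mem _ _ t))
  have hlt : ∀ t, word ρ (E t) < n := fun t => by
    rw [hrank]
    exact (card_filter_lt_lt_card (hρ.apply_mem_startSet (orderEmbOfFin_mem _ _ t))).trans_eq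
      hρ.card_startSet
  have hf : (fun t : Fin n => if ht : piVal ρ t < n then (⟨piVal ρ t, ht⟩ : Fin n) else t)
      = fun t => ⟨word ρ (E t), hlt t⟩ := by
    funext t
    simp only [hval, dif_pos (hlt t)]
  have hinj : Function.Injective fun t => (⟨word ρ (E t), hlt t⟩ : Fin n) := by
    intro t t' htt'
    simp only [Fin.mk.injEq, hrank] at htt'
    exact E.injective (ρ.injective ((card_filter_lt_strictMonoOn _).injOn
      (hρ.apply_mem_startSet (orderEmbOfFin_mem _ _ t))
      (hρ.apply_mem_startSet (orderEmbOfFin_mem _ _ t')) htt'))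
  rw [piPerm, hf, dif_pos (Finite.injective_iff_bijective.1 hinj)]
  rfl

end WireDiagram

section Uncrossing

variable {n : ℕ} {σ : WDperm n} {a c : Fin (2 * n)}

theorem IsCrossing.lt_apply_left (h : IsCrossing σ a c) : a < σ a := h.1.trans h.2.1

theorem IsCrossing.lt_apply_right (h : IsCrossing σ a c) : c < σ c := h.2.1.trans h.2.2

theorem not_isCrossing_left {t : Fin (2 * n)} (ht : σ t ≤ t) (s : Fin (2 * n)) :
    ¬ IsCrossing σ t s := fun hc => hc.lt_apply_left.not_ge ht

theorem not_isCrossing_right {t : Fin (2 * n)} (ht : σ t ≤ t) (s : Fin (2 * n)) :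
    ¬ IsCrossing σ s t := fun hc => hc.lt_apply_right.not_ge ht

theorem nestU_apply (z : Fin (2 * n)) :
    nestU σ a c z = swap (σ a) (σ c) (σ (swap (σ a) (σ c) z)) := rfl

theorem nestU_apply_of_ne {z : Fin (2 * n)} (hza : z ≠ a) (hzc : z ≠ c) (hzb : z ≠ σ a)
    (hzd : z ≠ σ c) : nestU σ a c z = σ z := by
  rw [nestU_apply, swap_apply_of_ne_of_ne hzb hzd,
    swap_apply_of_ne_of_ne (σ.injective.ne hza) (σ.injective.ne hzc)]

variable (hσ : Function.Involutive σ) (h : IsCrossing σ a c)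
include h

theorem nestU_apply_left : nestU σ a c a = σ c := by
  obtain ⟨h₁, h₂, h₃⟩ := h
  rw [nestU_apply, swap_apply_of_ne_of_ne (x := a) (by order) (by order), swap_apply_left]

theorem nestU_apply_right : nestU σ a c c = σ a := by
  obtain ⟨h₁, h₂, h₃⟩ := h
  rw [nestU_apply, swap_apply_of_ne_of_ne (x := c) (by order) (by order), swap_apply_right]

include hσ

theorem nestU_apply_apply_left : nestU σ a c (σ a) = c := by
  obtain ⟨h₁, h₂, h₃⟩ := h
  rw [nestU_apply, swap_apply_left, hσ, swap_apply_of_ne_of_ne (by order) (by order)]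

theorem nestU_apply_apply_right : nestU σ a c (σ c) = a := by
  obtain ⟨h₁, h₂, h₃⟩ := h
  rw [nestU_apply, swap_apply_right, hσ, swap_apply_of_ne_of_ne (by order) (by order)]

theorem lt_nestU_apply_iff (z : Fin (2 * n)) : z < nestU σ a c z ↔ z < σ z := by
  have ⟨h₁, h₂, h₃⟩ := h
  by_cases hza : z = a
  · subst hza; rw [nestU_apply_left h]; exact iff_of_true (by order) (by order)
  by_cases hzc : z = c
  · subst hzc; rw [nestU_apply_right h]; exact iff_of_true (by order) (by order)
  by_cases hzb : z = σ a
  · subst hzb; rw [nestU_apply_apply_left hσ h, hσ]; exact iff_of_false (by order) (by order)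
  by_cases hzd : z = σ c
  · subst hzd; rw [nestU_apply_apply_right hσ h, hσ]; exact iff_of_false (by order) (by order)
  rw [nestU_apply_of_ne hza hzc hzb hzd]

theorem nestU_apply_of_lt {z : Fin (2 * n)} (hz : z < σ z) (hza : z ≠ a) (hzc : z ≠ c) :
    nestU σ a c z = σ z := by
  refine nestU_apply_of_ne hza hzc ?_ ?_ <;> rintro rfl <;> rw [hσ] at hz
  · exact hz.not_gt h.lt_apply_left
  · exact hz.not_gt h.lt_apply_right

theorem nestU_apply_eq_swap_apply {z : Fin (2 * n)} (hza : z ≠ a) (hzc : z ≠ c) :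
    nestU σ a c z = swap a c (σ z) := by
  by_cases hzb : z = σ a
  · rw [hzb, nestU_apply_apply_left hσ h, hσ, swap_apply_left]
  by_cases hzd : z = σ c
  · rw [hzd, nestU_apply_apply_right hσ h, hσ, swap_apply_right]
  rw [nestU_apply_of_ne hza hzc hzb hzd, swap_apply_of_ne_of_ne]
  · exact fun hb => hzb (by rw [← hb, hσ])
  · exact fun hd => hzd (by rw [← hd, hσ])

theorem isCrossing_nestU_iff {p q : Fin (2 * n)} (hpa : p ≠ a) (hpc : p ≠ c) (hqa : q ≠ a)
    (hqc : q ≠ c) : IsCrossing (nestU σ a c) p q ↔ IsCrossing σ p q := by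
  suffices hpq : IsCrossing (nestU σ a c) p q ∨ IsCrossing σ p q →
      nestU σ a c p = σ p ∧ nestU σ a c q = σ q by
    unfold IsCrossing
    constructor <;> intro hc
    · rwa [← (hpq (.inl hc)).1, ← (hpq (.inl hc)).2]
    · rwa [(hpq (.inr hc)).1, (hpq (.inr hc)).2]
  intro hc
  have hp : p < σ p := by
    rcases hc with hc | hc
    · exact (lt_nestU_apply_iff hσ h p).1 hc.lt_apply_left
    · exact hc.lt_apply_left
  have hq : q < σ q := by
    rcases hc with hc | hc
    · exact (lt_nestU_apply_iff hσ h q).1 hc.lt_apply_right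
    · exact hc.lt_apply_right
  exact ⟨nestU_apply_of_lt hσ h hp hpa hpc, nestU_apply_of_lt hσ h hq hqa hqc⟩

theorem ncross_nestU : ncross σ = ncross (nestU σ a c) + 1
    + 2 * #(univ.filter fun z => a < z ∧ z < c ∧ σ a < σ z ∧ σ z < σ c) := by
  have ⟨h₁, h₂, h₃⟩ := h
  unfold ncross
  rw [card_filter_prod_eq_sum_sum, card_filter_prod_eq_sum_sum]
  dsimp only
  apply sum_sum_eq_add_of_pair h₁.ne
  · simp
  · simp
  · intro p q hpa hpc hqa hqc
    simp only [isCrossing_nestU_iff hσ h hpa hpc hqa hqc]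
  · intro t hta htc
    rcases le_or_gt (σ t) t with ht | ht
    · have ht' : nestU σ a c t ≤ t :=
        not_lt.1 fun h' => ht.not_gt ((lt_nestU_apply_iff hσ h t).1 h')
      have hmid : ¬ (a < t ∧ t < c ∧ σ a < σ t ∧ σ t < σ c) := fun hm => by order
      simp only [mem_filter, mem_univ, true_and, hmid, not_isCrossing_left ht,
        not_isCrossing_right ht, not_isCrossing_left ht', not_isCrossing_right ht']
      rfl
    · have hτt := nestU_apply_of_lt hσ h ht hta htc
      have htb : t ≠ σ a := fun htb => by rw [htb, hσ] at ht; order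
      have htd : t ≠ σ c := fun htd => by rw [htd, hσ] at ht; order
      have hσtb := σ.injective.ne hta
      have hσtd := σ.injective.ne htc
      simp only [IsCrossing, mem_filter, mem_univ, true_and, hτt, nestU_apply_left h,
        nestU_apply_right h]
      rcases hta.lt_or_gt with h₄ | h₄ <;> rcases htc.lt_or_gt with h₅ | h₅ <;>
        rcases hσtb.lt_or_gt with h₈ | h₈ <;> rcases hσtd.lt_or_gt with h₉ | h₉ <;>
        first
        | (exfalso; order)
        | (simp only [*, not_lt_of_gt, true_and, and_true, false_and, and_false, if_true, if_false]
           <;> split_ifs <;> first | rfl | (exfalso; order))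
  · simp [IsCrossing, nestU_apply_left h, nestU_apply_right h, h₁, h₂, h₃, not_lt_of_gt]

theorem diffList_nestU : diffList σ (nestU σ a c) = [a, c, σ a, σ c] := by
  have ⟨h₁, h₂, h₃⟩ := h
  have hdiff : univ.filter (fun z => σ z ≠ nestU σ a c z) = [a, c, σ a, σ c].toFinset := by
    ext z
    simp only [mem_filter, mem_univ, true_and, List.mem_toFinset, List.mem_cons,
      List.not_mem_nil, or_false]
    constructor
    · contrapose!
      exact fun ⟨hza, hzc, hzb, hzd⟩ => (nestU_apply_of_ne hza hzc hzb hzd).symm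
    · rintro (rfl | rfl | rfl | rfl)
      · rw [nestU_apply_left h]; exact h₃.ne
      · rw [nestU_apply_right h]; exact h₃.ne'
      · rw [nestU_apply_apply_left hσ h, hσ]; exact h₁.ne
      · rw [nestU_apply_apply_right hσ h, hσ]; exact h₁.ne'
  have hsorted : [a, c, σ a, σ c].Pairwise (· < ·) := by
    simp only [List.pairwise_cons, List.mem_cons, List.not_mem_nil, or_false, forall_eq_or_imp,
      forall_eq, List.Pairwise.nil, false_implies, implies_true, and_true]
    refine ⟨⟨?_, ?_, ?_⟩, ⟨?_, ?_⟩, ?_⟩ <;> order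
  rw [diffList, hdiff]
  exact (List.toFinset_sort _ hsorted.nodup).2 (hsorted.imp le_of_lt)

theorem lbl_nestU {x y : {σ : WDperm n // IsWD σ}} (hx : x.1 = σ) (hy : y.1 = nestU σ a c) :
    lbl (some x) (some y) = .pair (word σ a) (word σ c) := by
  simp only [lbl, hx, hy, diffList_nestU hσ h, List.getElem?_cons_zero, List.getElem?_cons_succ,
    nestU_apply_left h, if_true]

theorem startSet_disjU_ne : startSet (disjU σ a c) ≠ startSet σ := by
  have ⟨h₁, h₂, h₃⟩ := h
  intro hS
  have hc : c ∈ startSet (disjU σ a c) := hS ▸ mem_startSet.2 h.lt_apply_right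
  have : disjU σ a c c = a := by
    rw [disjU, Perm.mul_apply, Perm.mul_apply, swap_apply_right, hσ,
      swap_apply_of_ne_of_ne (by order) h₁.ne]
  rw [mem_startSet, this] at hc
  exact h₁.not_gt hc

end Uncrossing

section NestingStep

variable {n : ℕ} {σ : WDperm n} {a c : Fin (2 * n)}

theorem word_apply (hσ : Function.Involutive σ) (z : Fin (2 * n)) :
    word σ (σ z) = word σ z := by
  rw [word, word, hσ, min_comm]

theorem IsWD.piPerm_lt_piPerm_iff (hσ : IsWD σ) {t t' : Fin n} :
    piPerm σ t < piPerm σ t' ↔ σ ((secondEnds σ).orderEmbOfFin hσ.card_secondEnds t)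
      < σ ((secondEnds σ).orderEmbOfFin hσ.card_secondEnds t') := by
  have hE := fun t => orderEmbOfFin_mem (secondEnds σ) hσ.card_secondEnds t
  rw [Fin.lt_def, hσ.piPerm_apply, hσ.piPerm_apply, word_of_apply_lt (mem_secondEnds.1 (hE t)),
    word_of_apply_lt (mem_secondEnds.1 (hE t'))]
  exact (card_filter_lt_strictMonoOn _).lt_iff_lt (hσ.apply_mem_startSet (hE t))
    (hσ.apply_mem_startSet (hE t'))

theorem IsWD.card_piPerm_between_le (hσ : IsWD σ) (p q : Fin n) :
    #(univ.filter fun t =>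
        p < t ∧ t < q ∧ piPerm σ p < piPerm σ t ∧ piPerm σ t < piPerm σ q)
      ≤ #(univ.filter fun z =>
          σ ((secondEnds σ).orderEmbOfFin hσ.card_secondEnds p) < z
          ∧ z < σ ((secondEnds σ).orderEmbOfFin hσ.card_secondEnds q)
          ∧ (secondEnds σ).orderEmbOfFin hσ.card_secondEnds p < σ z
          ∧ σ z < (secondEnds σ).orderEmbOfFin hσ.card_secondEnds q) := by
  set E := (secondEnds σ).orderEmbOfFin hσ.card_secondEnds
  refine card_le_card_of_injOn (fun t => σ (E t)) (fun t ht => ?_)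
    (fun t _ t' _ htt' => E.injective (σ.injective htt'))
  have hinv : ∀ z, σ (σ z) = z := hσ.1
  simp only [mem_coe, mem_filter, mem_univ, true_and, hσ.piPerm_lt_piPerm_iff] at ht ⊢
  rw [hinv]
  exact ⟨ht.2.2.1, ht.2.2.2, E.lt_iff_lt.2 ht.1, E.lt_iff_lt.2 ht.2.1⟩

variable (hσ : IsWD σ)
include hσ

theorem isWD_nestU : IsWD (nestU σ a c) := by
  refine ⟨fun z => ?_, fun z hz => ?_⟩
  · simp [nestU_apply, hσ.1 _]
  · simp only [nestU_apply] at hz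
    exact hσ.2 _ (swap_apply_eq_iff.1 hz)

variable (h : IsCrossing σ a c)
include h

theorem startSet_nestU : startSet (nestU σ a c) = startSet σ := by
  ext z
  simp only [mem_startSet, lt_nestU_apply_iff hσ.1 h]

theorem piPerm_nestU {i j : Fin n} (hi : word σ a = i) (hj : word σ c = j) :
    piPerm (nestU σ a c) = swap i j * piPerm σ := by
  have hτ : IsWD (nestU σ a c) := isWD_nestU hσ
  have hsec : secondEnds (nestU σ a c) = secondEnds σ := by
    ext z
    rw [hτ.mem_secondEnds_iff, hσ.mem_secondEnds_iff, startSet_nestU hσ h]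
  have ha : a ∈ startSet σ := mem_startSet.2 h.lt_apply_left
  have hc : c ∈ startSet σ := mem_startSet.2 h.lt_apply_right
  ext t
  set z := (secondEnds σ).orderEmbOfFin hσ.card_secondEnds t
  have hz : z ∈ secondEnds σ := orderEmbOfFin_mem _ _ t
  have hza : z ≠ a := by rintro rfl; exact hσ.mem_secondEnds_iff.1 hz ha
  have hzc : z ≠ c := by rintro rfl; exact hσ.mem_secondEnds_iff.1 hz hc
  calc (piPerm (nestU σ a c) t : ℕ) = word (nestU σ a c) z := by
        rw [hτ.piPerm_apply]; simp only [hsec, z]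
    _ = #((startSet σ).filter (· < swap a c (σ z))) := by
        rw [word_of_apply_lt (mem_secondEnds.1 (hsec ▸ hz)),
          nestU_apply_eq_swap_apply hσ.1 h hza hzc, startSet_nestU hσ h]
    _ = swap (word σ a) (word σ c) (word σ z) := by
        rw [card_filter_lt_swap_apply ha hc (hσ.apply_mem_startSet hz), word_of_lt h.lt_apply_left,
          word_of_lt h.lt_apply_right, word_of_apply_lt (mem_secondEnds.1 hz)]
    _ = ((swap i j * piPerm σ) t : ℕ) := by
        rw [hi, hj, Perm.mul_apply, ← hσ.piPerm_apply]
        exact Fin.valEmbedding.swap_apply i j (piPerm σ t)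

end NestingStep

theorem nesting_cover_bruhat_step_general (n : ℕ) (x y : {σ : WDperm n // IsWD σ})
    (hcov : Cov (some x) (some y)) (hS : startSet x.1 = startSet y.1)
    (i j : Fin n) (hij : i < j)
    (hlbl : lbl (some x) (some y) = Lbl.pair (i : ℕ) (j : ℕ)) :
    piPerm y.1 = Equiv.swap i j * piPerm x.1 ∧
      numInv (piPerm y.1) = numInv (piPerm x.1) + 1 := by
  obtain ⟨σ, hσ⟩ := x
  obtain ⟨τ, hτ⟩ := y
  dsimp only at hS ⊢
  obtain ⟨hstep, hnc⟩ : UncCov σ τ := hcov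
  obtain ⟨a, c, h, rfl⟩ : IsNestStep σ τ := hstep.resolve_right
    fun ⟨a, c, h, hdisj⟩ => startSet_disjU_ne hσ.1 h (hdisj ▸ hS.symm)
  obtain ⟨hi, hj⟩ := Lbl.pair.inj ((lbl_nestU hσ.1 h rfl rfl).symm.trans hlbl)
  have hπ := piPerm_nestU hσ h hi hj
  refine ⟨hπ, ?_⟩
  obtain ⟨p, hp⟩ : σ a ∈ Set.range ((secondEnds σ).orderEmbOfFin hσ.card_secondEnds) := by
    simp [hσ.1 a, h.lt_apply_left]
  obtain ⟨q, hq⟩ : σ c ∈ Set.range ((secondEnds σ).orderEmbOfFin hσ.card_secondEnds) := by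
    simp [hσ.1 c, h.lt_apply_right]
  have hpi : piPerm σ p = i := Fin.ext (by rw [hσ.piPerm_apply, hp, word_apply hσ.1, hi])
  have hqj : piPerm σ q = j := Fin.ext (by rw [hσ.piPerm_apply, hq, word_apply hσ.1, hj])
  have hpq : p < q := (OrderEmbedding.lt_iff_lt _).1 (hp ▸ hq ▸ h.2.2)
  have hnested : #(univ.filter fun z => a < z ∧ z < c ∧ σ a < σ z ∧ σ z < σ c) = 0 := by
    have := ncross_nestU hσ.1 h
    omega
  have hbetween := hσ.card_piPerm_between_le p q
  rw [hp, hq, hσ.1, hσ.1, hnested, Nat.le_zero] at hbetween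
  rw [hπ, ← hpi, ← hqj, ← mul_swap_eq_swap_mul, numInv_mul_swap _ hpq (hpi ▸ hqj ▸ hij),
    hbetween]

/-- For a start-set-preserving cover `x ⋖ y` in `P_n^*` with label `(i, j)`, `i < j` (a nesting
uncrossing of wires `i` and `j` of `x`), we have `π(y) = (i j) ∘ π(x)` and
`inv(π(y)) = inv(π(x)) + 1`. -/
theorem nesting_cover_bruhat_step (n : ℕ) (hn : 2 ≤ n) (x y : {σ : WDperm n // IsWD σ})
    (hcov : Cov (some x) (some y)) (hS : startSet x.1 = startSet y.1)
    (i j : Fin n) (hij : i < j)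
    (hlbl : lbl (some x) (some y) = Lbl.pair (i : ℕ) (j : ℕ)) :
    piPerm y.1 = Equiv.swap i j * piPerm x.1 ∧
      numInv (piPerm y.1) = numInv (piPerm x.1) + 1 :=
  nesting_cover_bruhat_step_general n x y hcov hS i j hij hlbl
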